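/- Let ψ0, ψ1 ∈ ℓ²(ℕ, ℂ), ω, t ∈ ℝ, and define the time-evolved state Ψ(t) = (ψ0(t), e^{−iωt}·ψ1(t)), where (ψ_a(t))(n) = e^{−iωtn}·ψ_a(n) for a = 0,1. Then ψ0(t), ψ1(t) ∈ ℓ²(ℕ, ℂ) and the concurrence is time independent: C(Ψ(t)) = C(ψ0, ψ1). -/

import Mathlib

open scoped InnerProductSpace ComplexConjugate

noncomputable section

/-- The Hilbert space `ℓ²(ℕ, ℂ)` of square-summable complex sequences. -/
abbrev H : Type := lp (fun _ : ℕ => ℂ) 2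

/-- The concurrence of a fermion–boson state `(ψ0, ψ1) ∈ H × H`. -/
noncomputable def concurrence (ψ0 ψ1 : H) : ℝ :=
  2 * Real.sqrt (‖ψ0‖ ^ 2 * ‖ψ1‖ ^ 2 - ‖(⟪ψ0, ψ1⟫_ℂ : ℂ)‖ ^ 2)

/-- Time evolution of the `n`-th Fock coefficient: multiplication by `e^{−iωtn}`. -/
noncomputable def evolve (ω t : ℝ) (ψ : ℕ → ℂ) : ℕ → ℂ := fun n =>
  Complex.exp (-Complex.I * ω * t * n) * ψ n

lemma norm_exp_phase (r : ℂ) (hr : r.re = 0) : ‖Complex.exp r‖ = 1 := by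
  rw [Complex.norm_exp, hr, Real.exp_zero]

lemma norm_evolve (ω t : ℝ) (ψ : ℕ → ℂ) (n : ℕ) : ‖evolve ω t ψ n‖ = ‖ψ n‖ := by
  rw [evolve, norm_mul, norm_exp_phase, one_mul]
  simp [Complex.mul_re]

lemma memℓp_evolve (ω t : ℝ) (ψ : H) : Memℓp (evolve ω t (ψ : ℕ → ℂ)) 2 := by
  apply memℓp_gen
  have := (lp.memℓp ψ).summable (p := 2) (by norm_num)
  refine this.congr fun n => ?_
  rw [norm_evolve]

lemma inner_evolve (ω t : ℝ) (ψ0 ψ1 : H) :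
    (⟪(⟨evolve ω t (ψ0 : ℕ → ℂ), memℓp_evolve ω t ψ0⟩ : H),
      (⟨evolve ω t (ψ1 : ℕ → ℂ), memℓp_evolve ω t ψ1⟩ : H)⟫_ℂ : ℂ) = ⟪ψ0, ψ1⟫_ℂ := by
  rw [lp.inner_eq_tsum, lp.inner_eq_tsum]
  congr 1
  funext n
  rw [RCLike.inner_apply', RCLike.inner_apply']
  show (starRingEnd ℂ) (evolve ω t (ψ0 : ℕ → ℂ) n) * evolve ω t (ψ1 : ℕ → ℂ) n
      = (starRingEnd ℂ) ((ψ0 : ℕ → ℂ) n) * (ψ1 : ℕ → ℂ) n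
  simp only [evolve, map_mul]
  have : (starRingEnd ℂ) (Complex.exp (-Complex.I * ω * t * n)) *
      Complex.exp (-Complex.I * ω * t * n) = 1 := by
    rw [← Complex.normSq_eq_conj_mul_self, ← Complex.sq_norm]
    have := norm_exp_phase (-Complex.I * ω * t * n) (by simp [Complex.mul_re])
    rw [this]; norm_num
  rw [mul_mul_mul_comm, this, one_mul]

/-- Time independence of entanglement: the time-evolved state
`Ψ(t) = (ψ0(t), e^{−iωt}·ψ1(t))`, where `(ψ_a(t))(n) = e^{−iωtn}·ψ_a(n)`, has
coefficient sequences again in `ℓ²(ℕ, ℂ)` and the same concurrence as `(ψ0, ψ1)`. -/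
theorem concurrence_time_independent (ψ0 ψ1 : H) (ω t : ℝ) :
    ∃ (h0 : Memℓp (evolve ω t (ψ0 : ℕ → ℂ)) 2)
      (h1 : Memℓp (evolve ω t (ψ1 : ℕ → ℂ)) 2),
      concurrence (⟨evolve ω t (ψ0 : ℕ → ℂ), h0⟩ : H)
          (Complex.exp (-Complex.I * ω * t) • (⟨evolve ω t (ψ1 : ℕ → ℂ), h1⟩ : H)) =
        concurrence ψ0 ψ1 := by
  refine ⟨memℓp_evolve ω t ψ0, memℓp_evolve ω t ψ1, ?_⟩
  set φ0 : H := ⟨evolve ω t (ψ0 : ℕ → ℂ), memℓp_evolve ω t ψ0⟩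
  set φ1 : H := ⟨evolve ω t (ψ1 : ℕ → ℂ), memℓp_evolve ω t ψ1⟩
  have hc : ‖Complex.exp (-Complex.I * ω * t)‖ = 1 :=
    norm_exp_phase _ (by simp [Complex.mul_re])
  have hn0 : ‖φ0‖ ^ 2 = ‖ψ0‖ ^ 2 := by
    rw [← inner_self_eq_norm_sq (𝕜 := ℂ), ← inner_self_eq_norm_sq (𝕜 := ℂ),
      inner_evolve ω t ψ0 ψ0]
  have hn1 : ‖φ1‖ ^ 2 = ‖ψ1‖ ^ 2 := by
    rw [← inner_self_eq_norm_sq (𝕜 := ℂ), ← inner_self_eq_norm_sq (𝕜 := ℂ),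
      inner_evolve ω t ψ1 ψ1]
  unfold concurrence
  rw [norm_smul, hc, one_mul, inner_smul_right, norm_mul, hc, one_mul,
    inner_evolve, hn0, hn1]
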